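/- arXiv:1412.0070 — 2 statements merged into one kernel-verified Lean document; each statement's English description precedes it below -/
import Mathlib

section
/- If 𝒫 is a uniformly random k-path (i.e., the k shuffles are independent with each M_{a,b} chosen by picking a and b independently and uniformly from {1,…,n}), then θ_{i,j}𝒫 is also a uniformly random k-path. -/
/-- One step of the `𝒫`-queue driven by the shuffle `M_{a,b}` with `ab = (a, b)`. -/
def queueStep {n : ℕ} (i j : Fin n) (Q : Finset (Fin n)) (ab : Fin n × Fin n) :
    Finset (Fin n) :=
  if ab.1 = j then {i}
  else if ab.1 = i then {j}
  else if ab.2 ∈ Q then insert ab.1 Q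
  else Q.erase ab.1

/-- The `𝒫`-queue at time `t`, for the `k`-path `w` (the shuffle at time `t + 1` is `w t`);
`Q 0 = ∅`. -/
def queueSeq {n : ℕ} (i j : Fin n) {k : ℕ} (w : Fin k → Fin n × Fin n) : ℕ → Finset (Fin n)
  | 0 => ∅
  | t + 1 => if h : t < k then queueStep i j (queueSeq i j w t) (w ⟨t, h⟩) else queueSeq i j w t

/-- The card moved at time `t ∈ {1, …, k}` by the `k`-path `w` (`none` if `t` is out of
range). -/
def cardMoved {n k : ℕ} (w : Fin k → Fin n × Fin n) (t : ℕ) : Option (Fin n) :=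
  if h : 1 ≤ t ∧ t ≤ k then some (w ⟨t - 1, by omega⟩).1 else none

/-- The shuffle at time `t` is an `i`-or-`j` move. -/
def isIJMove {n : ℕ} (i j : Fin n) {k : ℕ} (w : Fin k → Fin n × Fin n) (t : ℕ) : Prop :=
  cardMoved w t = some i ∨ cardMoved w t = some j

/-- `t` is a good time for the `k`-path `w`: it is an `i`-or-`j` move, and the next
`i`-or-`j` move `t'` (within `{1, …, k}`) has a singleton queue at time `t' - 1` and moves a
different card than the one moved at time `t`. -/
def isGoodTime {n : ℕ} (i j : Fin n) {k : ℕ} (w : Fin k → Fin n × Fin n) (t : ℕ) : Prop :=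
  isIJMove i j w t ∧
    ∃ t', t < t' ∧ t' ≤ k ∧ isIJMove i j w t' ∧
      (∀ s, t < s → s < t' → ¬ isIJMove i j w s) ∧
      (queueSeq i j w (t' - 1)).card = 1 ∧
      cardMoved w t' ≠ cardMoved w t

-- The last good time `T` of the `k`-path `w`, equal to `∞` if there are no good times.
open Classical in
noncomputable def lastGoodTime {n : ℕ} (i j : Fin n) {k : ℕ} (w : Fin k → Fin n × Fin n) :
    ℕ∞ :=
  if ∃ t, isGoodTime i j w t then (Nat.findGreatest (isGoodTime i j w) k : ℕ∞) else ⊤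

-- `θ_{i,j}` : interchange the roles of `i` and `j` in every shuffle at a time strictly
-- before the last good time `T` (the shuffle at time `t + 1` is `w t`).
open Classical in
noncomputable def theta {n : ℕ} (i j : Fin n) {k : ℕ} (w : Fin k → Fin n × Fin n) :
    Fin k → Fin n × Fin n :=
  fun s => if (((s : ℕ) + 1 : ℕ) : ℕ∞) < lastGoodTime i j w
    then (Equiv.swap i j (w s).1, Equiv.swap i j (w s).2)
    else w s

/-!
Relabelling `i ↔ j` in every shuffle is a symmetry of the queue dynamics and of the notion of
good time. `θ` applies this relabelling only before the last good time `T`; since the move at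
time `T` is an `i`-or-`j` move, the queue is reset there, so the queues, moves and hence good
times from `T` on are the same for `𝒫` and `θ 𝒫`. Thus `θ 𝒫` has the same last good time as
`𝒫`, so `θ` is an involution, and a bijection preserves the uniform distribution.
-/

namespace PMF

theorem map_uniformOfFintype_of_bijective {α β : Type*} [Fintype α] [Nonempty α] [Fintype β]
    [Nonempty β] {f : α → β} (hf : Function.Bijective f) :
    (uniformOfFintype α).map f = uniformOfFintype β := by
  ext b
  obtain ⟨a, rfl⟩ := hf.2 b
  rw [map_apply, tsum_eq_single a fun a' ha' => if_neg fun h => ha' (hf.1 h.symm)]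
  simp [Fintype.card_of_bijective hf]

end PMF

section Queue

variable {n k : ℕ} (i j : Fin n)

theorem queueStep_comm : queueStep j i = queueStep i j := by
  ext Q ab : 2
  unfold queueStep
  split_ifs <;> simp_all

theorem queueStep_perm (σ : Equiv.Perm (Fin n)) (Q : Finset (Fin n)) (ab : Fin n × Fin n) :
    queueStep (σ i) (σ j) (Q.map σ.toEmbedding) (Prod.map σ σ ab) =
      (queueStep i j Q ab).map σ.toEmbedding := by
  unfold queueStep
  simp only [Prod.map_fst, Prod.map_snd, σ.injective.eq_iff, Finset.mem_map_equiv,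
    Equiv.symm_apply_apply]
  split_ifs <;> simp [Finset.map_insert, Finset.map_erase]

theorem queueStep_eq_of_ijMove {ab : Fin n × Fin n} (h : ab.1 = i ∨ ab.1 = j)
    (Q Q' : Finset (Fin n)) : queueStep i j Q ab = queueStep i j Q' ab := by
  unfold queueStep
  split_ifs <;> simp_all

theorem queueSeq_succ (w : Fin k → Fin n × Fin n) {t : ℕ} (ht : t < k) :
    queueSeq i j w (t + 1) = queueStep i j (queueSeq i j w t) (w ⟨t, ht⟩) :=
  dif_pos ht

theorem queueSeq_comm (w : Fin k → Fin n × Fin n) : queueSeq j i w = queueSeq i j w := by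
  ext1 t
  induction t with
  | zero => rfl
  | succ t ih => simp only [queueSeq, ih, queueStep_comm]

theorem queueSeq_perm (σ : Equiv.Perm (Fin n)) (w : Fin k → Fin n × Fin n) (t : ℕ) :
    queueSeq (σ i) (σ j) (Prod.map σ σ ∘ w) t = (queueSeq i j w t).map σ.toEmbedding := by
  induction t with
  | zero => rfl
  | succ t ih =>
    simp only [queueSeq, ih, Function.comp_apply, queueStep_perm, apply_dite]
    split_ifs <;> rfl

theorem queueSeq_eq_of_eq_of_le {u v : Fin k → Fin n × Fin n} {T : ℕ}
    (hT : queueSeq i j u T = queueSeq i j v T) (h : ∀ s : Fin k, T ≤ s → u s = v s) :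
    ∀ t, T ≤ t → queueSeq i j u t = queueSeq i j v t := by
  intro t ht
  induction t, ht using Nat.le_induction with
  | base => exact hT
  | succ t ht ih =>
    simp only [queueSeq, ih]
    split_ifs with htk
    · rw [h ⟨t, htk⟩ ht]
    · rfl

end Queue

section GoodTime

variable {n k : ℕ} (i j : Fin n)

theorem cardMoved_perm (σ : Equiv.Perm (Fin n)) (w : Fin k → Fin n × Fin n) (t : ℕ) :
    cardMoved (Prod.map σ σ ∘ w) t = (cardMoved w t).map σ := by
  unfold cardMoved
  split_ifs <;> rfl

theorem cardMoved_congr_of_lt {u v : Fin k → Fin n × Fin n} {m t : ℕ}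
    (h : ∀ s : Fin k, m ≤ s → u s = v s) (ht : m < t) : cardMoved u t = cardMoved v t := by
  unfold cardMoved
  split_ifs
  · rw [h _ (by simp only; omega)]
  · rfl

theorem isIJMove_iff {w : Fin k → Fin n × Fin n} {t : ℕ} :
    isIJMove i j w t ↔ ∃ s : Fin k, (s : ℕ) + 1 = t ∧ ((w s).1 = i ∨ (w s).1 = j) := by
  unfold isIJMove cardMoved
  split_ifs with h
  · simp only [Option.some.injEq]
    exact ⟨fun hm => ⟨⟨t - 1, by omega⟩, by simp only; omega, hm⟩,
      by rintro ⟨s, rfl, hm⟩; exact hm⟩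
  · simp only [or_self, false_iff, not_exists, not_and]
    omega

theorem isIJMove_comm (w : Fin k → Fin n × Fin n) (t : ℕ) :
    isIJMove j i w t ↔ isIJMove i j w t :=
  or_comm

theorem isIJMove_perm (σ : Equiv.Perm (Fin n)) (w : Fin k → Fin n × Fin n) (t : ℕ) :
    isIJMove (σ i) (σ j) (Prod.map σ σ ∘ w) t ↔ isIJMove i j w t := by
  simp [isIJMove, cardMoved_perm, Option.map_eq_some_iff]

theorem isGoodTime_comm (w : Fin k → Fin n × Fin n) (t : ℕ) :
    isGoodTime j i w t ↔ isGoodTime i j w t := by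
  simp only [isGoodTime, isIJMove_comm, queueSeq_comm]

theorem isGoodTime_perm (σ : Equiv.Perm (Fin n)) (w : Fin k → Fin n × Fin n) (t : ℕ) :
    isGoodTime (σ i) (σ j) (Prod.map σ σ ∘ w) t ↔ isGoodTime i j w t := by
  simp only [isGoodTime, isIJMove_perm, queueSeq_perm, Finset.card_map, cardMoved_perm,
    (Option.map_injective σ.injective).ne_iff]

theorem isGoodTime_swap (w : Fin k → Fin n × Fin n) (t : ℕ) :
    isGoodTime i j (Prod.map (Equiv.swap i j) (Equiv.swap i j) ∘ w) t ↔ isGoodTime i j w t := by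
  have h := isGoodTime_perm i j (Equiv.swap i j) w t
  rwa [Equiv.swap_apply_left, Equiv.swap_apply_right, isGoodTime_comm] at h

theorem isGoodTime.lt {w : Fin k → Fin n × Fin n} {t : ℕ} (h : isGoodTime i j w t) : t < k := by
  obtain ⟨-, t', htt', ht'k, -⟩ := h
  omega

theorem isGoodTime_congr_of_le {u v : Fin k → Fin n × Fin n} {T t : ℕ}
    (hc : ∀ s, T ≤ s → cardMoved u s = cardMoved v s)
    (hq : ∀ s, T ≤ s → queueSeq i j u s = queueSeq i j v s) (ht : T ≤ t) :
    isGoodTime i j u t ↔ isGoodTime i j v t := by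
  have hm : ∀ s, T ≤ s → (isIJMove i j u s ↔ isIJMove i j v s) := fun s hs => by
    rw [isIJMove, isIJMove, hc s hs]
  refine and_congr (hm t ht) (exists_congr fun t' => and_congr_right fun htt' => ?_)
  have hbetween : (∀ s, t < s → s < t' → ¬ isIJMove i j u s) ↔
      (∀ s, t < s → s < t' → ¬ isIJMove i j v s) :=
    forall_congr' fun s => imp_congr_right fun hs => by rw [hm s (by omega)]
  rw [hm t' (by omega), hbetween, hq (t' - 1) (by omega), hc t' (by omega), hc t ht]

end GoodTime

section Theta

variable {n k : ℕ} (i j : Fin n)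

theorem exists_isGreatest_isGoodTime {w : Fin k → Fin n × Fin n}
    (h : ∃ t, isGoodTime i j w t) : ∃ T, IsGreatest {t | isGoodTime i j w t} T :=
  BddAbove.exists_isGreatest_of_nonempty ⟨k, fun _ ht => (isGoodTime.lt i j ht).le⟩ h

theorem lastGoodTime_eq_top {w : Fin k → Fin n × Fin n} (h : ¬ ∃ t, isGoodTime i j w t) :
    lastGoodTime i j w = ⊤ :=
  if_neg h

open Classical in
theorem lastGoodTime_eq_of_isGreatest {w : Fin k → Fin n × Fin n} {T : ℕ}
    (h : IsGreatest {t | isGoodTime i j w t} T) : lastGoodTime i j w = T := by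
  rw [lastGoodTime, if_pos ⟨T, h.1⟩, Nat.cast_inj]
  exact Nat.findGreatest_eq_iff.mpr
    ⟨(isGoodTime.lt i j h.1).le, fun _ => h.1, fun _ hTt _ ht => (h.2 ht).not_gt hTt⟩

theorem theta_apply_of_le {w : Fin k → Fin n × Fin n} {s : Fin k}
    (h : lastGoodTime i j w ≤ ((s + 1 : ℕ) : ℕ∞)) : theta i j w s = w s :=
  if_neg h.not_gt

theorem theta_eq_of_lastGoodTime_eq_top {w : Fin k → Fin n × Fin n}
    (h : lastGoodTime i j w = ⊤) :
    theta i j w = Prod.map (Equiv.swap i j) (Equiv.swap i j) ∘ w :=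
  funext fun _ => if_pos (h ▸ ENat.natCast_lt_top _)

theorem lastGoodTime_theta (w : Fin k → Fin n × Fin n) :
    lastGoodTime i j (theta i j w) = lastGoodTime i j w := by
  by_cases hex : ∃ t, isGoodTime i j w t
  · obtain ⟨T, hT⟩ := exists_isGreatest_isGoodTime i j hex
    obtain ⟨⟨m, hmk⟩, rfl, hmove⟩ := (isIJMove_iff i j).1 hT.1.1
    have hL : lastGoodTime i j w = (m + 1 : ℕ) := lastGoodTime_eq_of_isGreatest i j hT
    have hagree : ∀ s : Fin k, m ≤ s → theta i j w s = w s := fun s hs =>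
      theta_apply_of_le i j (by rw [hL]; exact_mod_cast Nat.succ_le_succ hs)
    -- The `i`-or-`j` move at time `m + 1` resets the queue.
    have hq₀ : queueSeq i j (theta i j w) (m + 1) = queueSeq i j w (m + 1) := by
      rw [queueSeq_succ i j _ hmk, queueSeq_succ i j _ hmk, hagree _ le_rfl]
      exact queueStep_eq_of_ijMove i j hmove _ _
    have hq := queueSeq_eq_of_eq_of_le i j hq₀ fun s hs => hagree s (by omega)
    have hc : ∀ s, m + 1 ≤ s → cardMoved (theta i j w) s = cardMoved w s := fun _ hs =>
      cardMoved_congr_of_lt hagree hs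
    have hgood : ∀ t, m + 1 ≤ t → (isGoodTime i j (theta i j w) t ↔ isGoodTime i j w t) :=
      fun _ ht => isGoodTime_congr_of_le i j hc hq ht
    rw [hL]
    refine lastGoodTime_eq_of_isGreatest i j ⟨(hgood _ le_rfl).2 hT.1, fun t ht => ?_⟩
    by_contra! hlt
    exact hlt.not_ge (hT.2 ((hgood t hlt.le).1 ht))
  · have hL := lastGoodTime_eq_top i j hex
    rw [hL, theta_eq_of_lastGoodTime_eq_top i j hL]
    exact lastGoodTime_eq_top i j (by simpa only [isGoodTime_swap] using hex)

theorem theta_involutive : Function.Involutive (theta i j (k := k)) := by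
  intro w
  ext1 s
  rw [theta, lastGoodTime_theta]
  dsimp only [theta]
  split_ifs <;> simp

end Theta

theorem theta_uniform_general {n k : ℕ} [Nonempty (Fin n)] (i j : Fin n) :
    PMF.map (theta i j) (PMF.uniformOfFintype (Fin k → Fin n × Fin n)) =
      PMF.uniformOfFintype (Fin k → Fin n × Fin n) :=
  PMF.map_uniformOfFintype_of_bijective (theta_involutive i j).bijective

/-- If `𝒫` is a uniformly random `k`-path, then so is `θ_{i,j} 𝒫`. -/
theorem theta_uniform {n k : ℕ} [Nonempty (Fin n)] (i j : Fin n) (hij : i ≠ j) :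
    PMF.map (theta i j) (PMF.uniformOfFintype (Fin k → Fin n × Fin n)) =
      PMF.uniformOfFintype (Fin k → Fin n × Fin n) :=
  theta_uniform_general i j
end

section
/- For any k-path 𝒫 with last good time T: the θ_{i,j}𝒫-queue has i-or-j moves at the same times as the 𝒫-queue, the θ_{i,j}𝒫-queue equals the 𝒫-queue at all times t ≥ T, and the last good time of θ_{i,j}𝒫 equals the last good time T of 𝒫. -/
section Aux

variable {n k : ℕ} (i j : Fin n) (w : Fin k → Fin n × Fin n)

lemma cardMoved_theta (t : ℕ) :
    cardMoved (theta i j w) t =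
      if ((t : ℕ∞) < lastGoodTime i j w) then
        Option.map (Equiv.swap i j) (cardMoved w t) else cardMoved w t := by
  unfold cardMoved theta
  by_cases h : 1 ≤ t ∧ t ≤ k
  · simp only [h, dif_pos]
    have ht : t - 1 + 1 = t := by omega
    simp only [ht]
    split <;> split <;> simp_all
  · simp only [h, dif_neg, not_false_iff]
    split <;> simp

lemma isIJMove_theta (t : ℕ) :
    isIJMove i j (theta i j w) t ↔ isIJMove i j w t := by
  unfold isIJMove
  rw [cardMoved_theta]
  split
  · cases h : cardMoved w t with
    | none => simp
    | some a =>
      simp only [Option.map_some, Option.some.injEq]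
      by_cases hai : a = i <;> by_cases haj : a = j <;>
        simp [hai, haj, Equiv.swap_apply_left, Equiv.swap_apply_right,
          Equiv.swap_apply_of_ne_of_ne, *]
  · exact Iff.rfl


lemma queueStep_image (hij : i ≠ j) (Q : Finset (Fin n)) (ab : Fin n × Fin n) :
    queueStep i j (Q.image (Equiv.swap i j)) (Equiv.swap i j ab.1, Equiv.swap i j ab.2)
      = (queueStep i j Q ab).image (Equiv.swap i j) := by
  obtain ⟨a, b⟩ := ab
  unfold queueStep
  by_cases hai : a = i
  · subst hai
    simp [Equiv.swap_apply_left, hij, Ne.symm hij]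
  by_cases haj : a = j
  · subst haj
    simp [Equiv.swap_apply_right, hij, Ne.symm hij]
  · have hsa : Equiv.swap i j a = a := Equiv.swap_apply_of_ne_of_ne hai haj
    have hmem : Equiv.swap i j b ∈ Q.image (Equiv.swap i j) ↔ b ∈ Q := by
      simp [Finset.mem_image, (Equiv.swap i j).injective.eq_iff]
    simp only [hsa, if_neg hai, if_neg haj, hmem]
    split
    · rw [Finset.image_insert, hsa]
    · rw [Finset.image_erase (Equiv.swap i j).injective, hsa]

lemma queueSeq_theta_of_lt (hij : i ≠ j) :
    ∀ t : ℕ, ((t : ℕ∞) < lastGoodTime i j w) →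
      queueSeq i j (theta i j w) t = (queueSeq i j w t).image (Equiv.swap i j)
  | 0, _ => by simp [queueSeq]
  | t + 1, h => by
    have hlt : ((t : ℕ∞) < lastGoodTime i j w) :=
      lt_trans (by exact_mod_cast Nat.lt_succ_self t) h
    have ih := queueSeq_theta_of_lt hij t hlt
    unfold queueSeq
    split
    · rw [ih]
      have htheta : theta i j w ⟨t, by assumption⟩ =
          (Equiv.swap i j (w ⟨t, by assumption⟩).1,
           Equiv.swap i j (w ⟨t, by assumption⟩).2) := by
        unfold theta
        rw [if_pos]
        exact_mod_cast h
      rw [htheta]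
      exact queueStep_image i j hij _ _
    · exact ih


lemma isIJMove_bounds {t : ℕ} (h : isIJMove i j w t) : 1 ≤ t ∧ t ≤ k := by
  by_contra hc
  unfold isIJMove cardMoved at h
  rw [dif_neg hc] at h
  simp at h

lemma queueSeq_theta_of_ge (hij : i ≠ j) (m : ℕ)
    (hm : lastGoodTime i j w = (m : ℕ∞)) (hgood : isGoodTime i j w m) :
    ∀ t, m ≤ t → queueSeq i j (theta i j w) t = queueSeq i j w t := by
  have hb := isIJMove_bounds i j w hgood.1
  obtain ⟨p, rfl⟩ : ∃ p, m = p + 1 := ⟨m - 1, by omega⟩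
  have hpk : p < k := by omega
  have hbase : queueSeq i j (theta i j w) (p + 1) = queueSeq i j w (p + 1) := by
    have ha : (w ⟨p, hpk⟩).1 = i ∨ (w ⟨p, hpk⟩).1 = j := by
      have h1 := hgood.1
      unfold isIJMove cardMoved at h1
      rw [dif_pos hb] at h1
      simpa using h1
    have hth : theta i j w ⟨p, hpk⟩ = w ⟨p, hpk⟩ := by
      unfold theta
      rw [if_neg]
      rw [hm]
      simp
    have hlt : ((p : ℕ∞) < lastGoodTime i j w) := by
      rw [hm]; exact_mod_cast Nat.lt_succ_self p
    unfold queueSeq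
    rw [dif_pos hpk, dif_pos hpk, hth, queueSeq_theta_of_lt i j w hij p hlt]
    rcases ha with h | h <;> unfold queueStep <;> rw [h] <;>
      simp [hij, Ne.symm hij]
  have key : ∀ d, queueSeq i j (theta i j w) (p + 1 + d) = queueSeq i j w (p + 1 + d) := by
    intro d
    induction d with
    | zero => exact hbase
    | succ d ih =>
      have he : p + 1 + (d + 1) = (p + 1 + d) + 1 := by omega
      rw [he]
      unfold queueSeq
      split
      · rename_i hlt
        have hth : theta i j w ⟨p + 1 + d, hlt⟩ = w ⟨p + 1 + d, hlt⟩ := by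
          unfold theta
          rw [if_neg]
          rw [hm]
          intro hc
          have : p + 1 + d + 1 < p + 1 := by exact_mod_cast hc
          omega
        rw [hth, ih]
      · exact ih
  intro t ht
  have he : t = p + 1 + (t - (p + 1)) := by omega
  rw [he]
  exact key _

lemma cardMoved_theta_of_ge (m : ℕ) (hm : lastGoodTime i j w = (m : ℕ∞)) {t : ℕ}
    (ht : m ≤ t) : cardMoved (theta i j w) t = cardMoved w t := by
  rw [cardMoved_theta, if_neg]
  rw [hm]
  exact_mod_cast not_lt.2 ht

lemma isGoodTime_theta_of_ge (hij : i ≠ j) (m : ℕ)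
    (hm : lastGoodTime i j w = (m : ℕ∞)) (hgood : isGoodTime i j w m) {t : ℕ} (hmt : m ≤ t) :
    isGoodTime i j (theta i j w) t ↔ isGoodTime i j w t := by
  unfold isGoodTime
  simp only [isIJMove_theta]
  apply and_congr Iff.rfl
  apply exists_congr
  intro t'
  by_cases hlt : t < t'
  · rw [queueSeq_theta_of_ge i j w hij m hm hgood (t' - 1) (by omega),
      cardMoved_theta_of_ge i j w m hm (by omega : m ≤ t'),
      cardMoved_theta_of_ge i j w m hm hmt]
  · simp [hlt]

lemma isGoodTime_theta_of_top (hij : i ≠ j) (hm : lastGoodTime i j w = ⊤) (t : ℕ) :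
    isGoodTime i j (theta i j w) t ↔ isGoodTime i j w t := by
  have hq : ∀ s : ℕ, queueSeq i j (theta i j w) s =
      (queueSeq i j w s).image (Equiv.swap i j) := by
    intro s
    exact queueSeq_theta_of_lt i j w hij s (by rw [hm]; exact Ne.lt_top (by simp))
  have hc : ∀ s : ℕ, cardMoved (theta i j w) s =
      Option.map (Equiv.swap i j) (cardMoved w s) := by
    intro s
    rw [cardMoved_theta, if_pos]
    rw [hm]
    exact Ne.lt_top (by simp)
  unfold isGoodTime
  simp only [isIJMove_theta]
  apply and_congr Iff.rfl
  apply exists_congr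
  intro t'
  rw [hq, hc t', hc t, Finset.card_image_of_injective _ (Equiv.swap i j).injective]
  rw [(Option.map_injective (Equiv.swap i j).injective).ne_iff]

end Aux
/-- `θ_{i,j} 𝒫` has `i`-or-`j` moves at the same times as `𝒫`, its queue agrees with the
`𝒫`-queue at all times `t ≥ T`, and its last good time equals the last good time `T`
of `𝒫`. -/
theorem theta_queue_properties {n k : ℕ} (i j : Fin n) (hij : i ≠ j)
    (w : Fin k → Fin n × Fin n) :
    (∀ t : ℕ, isIJMove i j (theta i j w) t ↔ isIJMove i j w t) ∧
    (∀ t : ℕ, lastGoodTime i j w ≤ (t : ℕ∞) →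
      queueSeq i j (theta i j w) t = queueSeq i j w t) ∧
    lastGoodTime i j (theta i j w) = lastGoodTime i j w := by
  classical
  refine ⟨isIJMove_theta i j w, ?_, ?_⟩
  · intro t ht
    by_cases hex : ∃ s, isGoodTime i j w s
    · obtain ⟨t₀, ht₀⟩ := hex
      have hb₀ := isIJMove_bounds i j w ht₀.1
      have hgm : isGoodTime i j w (Nat.findGreatest (isGoodTime i j w) k) :=
        Nat.findGreatest_spec hb₀.2 ht₀
      have hm : lastGoodTime i j w = ((Nat.findGreatest (isGoodTime i j w) k : ℕ) : ℕ∞) := by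
        unfold lastGoodTime
        rw [if_pos ⟨t₀, ht₀⟩]
      refine queueSeq_theta_of_ge i j w hij _ hm hgm t ?_
      rw [hm] at ht
      exact_mod_cast ht
    · exfalso
      have hm : lastGoodTime i j w = ⊤ := by
        unfold lastGoodTime
        rw [if_neg hex]
      rw [hm] at ht
      exact absurd (le_antisymm le_top ht) (by simp)
  · by_cases hex : ∃ s, isGoodTime i j w s
    · obtain ⟨t₀, ht₀⟩ := hex
      have hb₀ := isIJMove_bounds i j w ht₀.1
      set m := Nat.findGreatest (isGoodTime i j w) k with hmdef
      have hgm : isGoodTime i j w m := Nat.findGreatest_spec hb₀.2 ht₀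
      have hm : lastGoodTime i j w = (m : ℕ∞) := by
        unfold lastGoodTime
        rw [if_pos ⟨t₀, ht₀⟩]
      have hbm := isIJMove_bounds i j w hgm.1
      have hgm' : isGoodTime i j (theta i j w) m :=
        (isGoodTime_theta_of_ge i j w hij m hm hgm le_rfl).2 hgm
      have hex' : ∃ s, isGoodTime i j (theta i j w) s := ⟨m, hgm'⟩
      have hfg : Nat.findGreatest (isGoodTime i j (theta i j w)) k = m := by
        apply le_antisymm
        · by_contra h'
          push_neg at h'
          have hP : isGoodTime i j (theta i j w)
              (Nat.findGreatest (isGoodTime i j (theta i j w)) k) :=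
            Nat.findGreatest_spec hbm.2 hgm'
          have hPw : isGoodTime i j w
              (Nat.findGreatest (isGoodTime i j (theta i j w)) k) :=
            (isGoodTime_theta_of_ge i j w hij m hm hgm (le_of_lt h')).1 hP
          exact Nat.findGreatest_is_greatest h' (Nat.findGreatest_le k) hPw
        · exact Nat.le_findGreatest hbm.2 hgm'
      unfold lastGoodTime
      rw [if_pos hex', if_pos ⟨t₀, ht₀⟩, hfg]
    · have hm : lastGoodTime i j w = ⊤ := by
        unfold lastGoodTime
        rw [if_neg hex]
      have hex' : ¬ ∃ s, isGoodTime i j (theta i j w) s := by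
        rintro ⟨s, hs⟩
        exact hex ⟨s, (isGoodTime_theta_of_top i j w hij hm s).1 hs⟩
      unfold lastGoodTime
      rw [if_neg hex', if_neg hex]
end
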